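/- arXiv:1108.0209 — 3 statements merged into one kernel-verified Lean document; each statement's English description precedes it below -/
import Mathlib

section
/- Let K be a finite field, n a positive integer, and f : K^n → K^n a map whose dependency graph is acyclic (it contains no directed cycles, including no self-loops). Then f has a unique fixed point: there exists exactly one x₀ ∈ K^n with f(x₀) = x₀. -/
/-!
Let `ρ i` be the number of coordinates from which `i` is reachable in the dependency graph.
Acyclicity makes `ρ` strictly increase along edges and keeps it below `n`. Since `(f z) i` only
depends on the `z j` with an edge `j → i`, induction on `k` shows that `(f^[k] x) i` is independent
of `x` as soon as `ρ i < k`. Hence `f^[n]` is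
constant; its value `c` is a fixed point because `f c = f^[n] (f x)`, and any fixed point `y`
equals `f^[n] y = c`.
-/

/-- The coordinate function `h : K^n → K` depends on variable `x_j`. -/
def DependsOnVar {n : ℕ} {K : Type*} (h : (Fin n → K) → K) (j : Fin n) : Prop :=
  ∃ (x : Fin n → K) (p q : K), p ≠ q ∧
    h (Function.update x j p) ≠ h (Function.update x j q)

/-- The dependency graph of `f : K^n → K^n` has an edge from `j` to `i`
iff the `i`-th coordinate function of `f` depends on `x_j`. -/
def DepEdge {n : ℕ} {K : Type*} (f : (Fin n → K) → (Fin n → K)) (j i : Fin n) : Prop :=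
  DependsOnVar (fun x => f x i) j

/-- The dependency graph of `f` is acyclic: there is no directed cycle
(of any length `m ≥ 1`, in particular no self-loop). -/
def DepAcyclic {n : ℕ} {K : Type*} (f : (Fin n → K) → (Fin n → K)) : Prop :=
  ¬ ∃ (m : ℕ) (v : ℕ → Fin n), 1 ≤ m ∧ v 0 = v m ∧
      ∀ t < m, DepEdge f (v t) (v (t + 1))

open Function Relation Finset

theorem Relation.TransGen.exists_seq {α : Type*} {r : α → α → Prop} {a b : α}
    (h : TransGen r a b) :
    ∃ (m : ℕ) (v : ℕ → α), 1 ≤ m ∧ v 0 = a ∧ v m = b ∧ ∀ t < m, r (v t) (v (t + 1)) := by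
  induction h with
  | single hab => exact ⟨1, fun t => if t = 0 then a else _, le_rfl, rfl, rfl, by simpa⟩
  | @tail b c _ hbc ih =>
    obtain ⟨m, v, hm, hv0, hvm, hstep⟩ := ih
    refine ⟨m + 1, fun t => if t ≤ m then v t else c, by omega, by simpa, by simp, ?_⟩
    intro t ht
    rcases Nat.lt_succ_iff_lt_or_eq.mp ht with ht | rfl
    · simpa [ht.le, Nat.succ_le_of_lt ht] using hstep t ht
    · simpa [hvm] using hbc

section AncestorCount

variable {α : Type*} [Fintype α] {r : α → α → Prop}

open Classical in
noncomputable def ancestorCount (r : α → α → Prop) (a : α) : ℕ :=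
  #{b | TransGen r b a}

theorem ancestorCount_lt_of_rel (hr : ∀ a, ¬ TransGen r a a) {a b : α} (hab : r a b) :
    ancestorCount r a < ancestorCount r b := by
  classical
  refine card_lt_card ⟨fun c hc => ?_, fun hsub => ?_⟩
  · simp only [mem_filter, mem_univ, true_and] at hc ⊢
    exact hc.tail hab
  · have : TransGen r a a := by simpa using hsub (by simpa using TransGen.single hab)
    exact hr a this

theorem ancestorCount_lt_card (hr : ∀ a, ¬ TransGen r a a) (a : α) :
    ancestorCount r a < Fintype.card α := by
  classical
  refine card_lt_univ_of_notMem (x := a) ?_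
  simpa using hr a

end AncestorCount

theorem Function.existsUnique_fixedPt_of_iterate_eq {α : Type*} [Nonempty α] {f : α → α} {k : ℕ}
    (hk : ∀ x y, f^[k] x = f^[k] y) : ∃! x, f x = x := by
  obtain ⟨a⟩ := ‹Nonempty α›
  refine ⟨f^[k] a, ?_, fun y hy => ?_⟩
  · show f (f^[k] a) = f^[k] a
    rw [← iterate_succ_apply' f k a, iterate_succ_apply]
    exact hk _ _
  · rw [← iterate_fixed hy k]
    exact hk _ _

section DependsOnVar

variable {n : ℕ} {K : Type*}

theorem apply_update_eq_of_not_dependsOnVar {h : (Fin n → K) → K} {j : Fin n}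
    (hj : ¬ DependsOnVar h j) (x : Fin n → K) (v : K) : h (update x j v) = h x := by
  by_contra hne
  exact hj ⟨x, v, x j, fun hv => hne (by rw [hv, update_eq_self]), by rwa [update_eq_self]⟩

theorem dependsOn_setOf_dependsOnVar (h : (Fin n → K) → K) :
    DependsOn h {j | DependsOnVar h j} := by
  classical
  intro x y hxy
  suffices ∀ s : Finset (Fin n), h (s.piecewise y x) = h x by
    simpa using (this univ).symm
  intro s
  induction s using Finset.induction_on with
  | empty => simp
  | insert a s ha ih =>
    rw [piecewise_insert, ← ih]
    by_cases hd : DependsOnVar h a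
    · rw [← hxy a hd, ← piecewise_eq_of_notMem s y x ha, update_eq_self]
    · exact apply_update_eq_of_not_dependsOnVar hd _ _

end DependsOnVar

section DepAcyclic

variable {n : ℕ} {K : Type*} {f : (Fin n → K) → (Fin n → K)}

theorem DepAcyclic.not_transGen_self (hf : DepAcyclic f) (i : Fin n) :
    ¬ TransGen (DepEdge f) i i := by
  intro hi
  obtain ⟨m, v, hm, hv0, hvm, hstep⟩ := hi.exists_seq
  exact hf ⟨m, v, hm, hv0.trans hvm.symm, hstep⟩

theorem DepAcyclic.iterate_apply_eq_of_ancestorCount_lt (hf : DepAcyclic f) (k : ℕ) :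
    ∀ i, ancestorCount (DepEdge f) i < k → ∀ x y, f^[k] x i = f^[k] y i := by
  induction k with
  | zero => omega
  | succ k ih =>
    intro i hi x y
    rw [iterate_succ_apply', iterate_succ_apply']
    refine dependsOn_setOf_dependsOnVar (fun z => f z i) fun j hj => ih j ?_ x y
    have := ancestorCount_lt_of_rel hf.not_transGen_self (show DepEdge f j i from hj)
    omega

theorem DepAcyclic.iterate_eq (hf : DepAcyclic f) (x y : Fin n → K) : f^[n] x = f^[n] y := by
  funext i
  refine hf.iterate_apply_eq_of_ancestorCount_lt n i ?_ x y
  simpa using ancestorCount_lt_card hf.not_transGen_self i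

end DepAcyclic

theorem unique_fixed_point_of_acyclic_general {K : Type*} [Field K] {n : ℕ}
    (f : (Fin n → K) → (Fin n → K)) (hf : DepAcyclic f) :
    ∃! x₀ : Fin n → K, f x₀ = x₀ :=
  existsUnique_fixedPt_of_iterate_eq hf.iterate_eq

/-- A map `f : K^n → K^n` over a finite field with acyclic dependency graph
has a unique fixed point. -/
theorem unique_fixed_point_of_acyclic {K : Type*} [Field K] [Fintype K] {n : ℕ}
    (hn : 0 < n) (f : (Fin n → K) → (Fin n → K)) (hf : DepAcyclic f) :
    ∃! x₀ : Fin n → K, f x₀ = x₀ :=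
  unique_fixed_point_of_acyclic_general f hf
end

section
/- Let K be a finite field, n a positive integer, f : K^n → K^n, and r ≥ 1. Suppose the dependency graph of f contains no directed walk of length r (equivalently, the r-fold max–min power of the dependency matrix of f is the zero matrix). Then f^r is a constant map, and consequently every state reaches the unique fixed point x₀ of f in at most r steps: f^r(x) = x₀ for all x ∈ K^n. -/
/-! A coordinate of `f^[r]` can depend on `x_j` only along a walk of length `r`
ending in that coordinate, so without such walks `f^[r]` is constant, say with value `x₀`.
Then `f x₀ = f^[r] (f x₀) = x₀`, and any fixed point `y` equals `f^[r] y = x₀`. -/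

section DependsOnVar

variable {n : ℕ} {K : Type*}

theorem apply_update_eq_of_not_dependsOnVar_s5 {h : (Fin n → K) → K} {k : Fin n}
    (hk : ¬ DependsOnVar h k) (x : Fin n → K) (p : K) : h (Function.update x k p) = h x := by
  by_cases hp : p = x k
  · rw [hp, Function.update_eq_self]
  · by_contra hne
    exact hk ⟨x, p, x k, hp, by rwa [Function.update_eq_self]⟩

theorem apply_eq_of_forall_dependsOnVar {h : (Fin n → K) → K} {a b : Fin n → K}
    (hab : ∀ k, DependsOnVar h k → a k = b k) : h a = h b := by
  classical
  suffices key : ∀ (s : Finset (Fin n)) (a : Fin n → K), (∀ k ∉ s, a k = b k) →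
      (∀ k, DependsOnVar h k → a k = b k) → h a = h b from
    key Finset.univ a (by simp) hab
  intro s
  induction s using Finset.induction_on with
  | empty => exact fun a ha _ => congrArg h (funext fun k => ha k (Finset.notMem_empty k))
  | insert k s _ ih =>
    intro a ha hab
    have hstep : h a = h (Function.update a k (b k)) := by
      by_cases hk : DependsOnVar h k
      · rw [← hab k hk, Function.update_eq_self]
      · exact (apply_update_eq_of_not_dependsOnVar_s5 hk a (b k)).symm
    refine hstep.trans (ih _ (fun l hl => ?_) (fun l hl => ?_))
    · rcases eq_or_ne l k with rfl | hlk
      · exact Function.update_self ..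
      · rw [Function.update_of_ne hlk]
        exact ha l (by simp [hlk, hl])
    · rcases eq_or_ne l k with rfl | hlk
      · exact Function.update_self ..
      · rw [Function.update_of_ne hlk]
        exact hab l hl

theorem exists_walk_of_dependsOnVar_iterate (f : (Fin n → K) → (Fin n → K)) (r : ℕ)
    {i j : Fin n} (hdep : DependsOnVar (fun x => f^[r] x i) j) :
    ∃ v : ℕ → Fin n, v 0 = j ∧ v r = i ∧ ∀ t < r, DepEdge f (v t) (v (t + 1)) := by
  induction r generalizing i with
  | zero =>
    obtain ⟨x, p, q, hpq, hne⟩ := hdep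
    obtain rfl : i = j := by
      by_contra hij
      simp [Function.update_of_ne hij] at hne
    exact ⟨fun _ => i, rfl, rfl, fun t ht => absurd ht (Nat.not_lt_zero t)⟩
  | succ r ih =>
    obtain ⟨x, p, q, hpq, hne⟩ := hdep
    simp only [Function.iterate_succ_apply'] at hne
    obtain ⟨k, hedge, hk⟩ : ∃ k, DepEdge f k i ∧
        f^[r] (Function.update x j p) k ≠ f^[r] (Function.update x j q) k := by
      by_contra! hall
      exact hne (apply_eq_of_forall_dependsOnVar hall)
    obtain ⟨v, hv0, hvr, hv⟩ := ih ⟨x, p, q, hpq, hk⟩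
    refine ⟨fun t => if t ≤ r then v t else i, by simp [hv0], by simp, fun t ht => ?_⟩
    rcases Nat.lt_or_ge t r with htr | htr
    · simpa [htr.le, Nat.succ_le_of_lt htr] using hv t htr
    · obtain rfl : t = r := by omega
      simpa [hvr] using hedge

theorem iterate_eq_of_not_exists_walk (f : (Fin n → K) → (Fin n → K)) (r : ℕ)
    (hwalk : ¬ ∃ v : ℕ → Fin n, ∀ t < r, DepEdge f (v t) (v (t + 1)))
    (x y : Fin n → K) : f^[r] x = f^[r] y :=
  funext fun _ => apply_eq_of_forall_dependsOnVar fun _ hdep =>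
    absurd (exists_walk_of_dependsOnVar_iterate f r hdep)
      fun ⟨v, _, _, hv⟩ => hwalk ⟨v, hv⟩

end DependsOnVar

theorem Function.exists_unique_fixedPoint_of_iterate_eq {α : Type*} [Nonempty α] {f : α → α}
    {r : ℕ} (hconst : ∀ x y, f^[r] x = f^[r] y) :
    ∃ x₀, f x₀ = x₀ ∧ (∀ y, f y = y → y = x₀) ∧ ∀ x, f^[r] x = x₀ := by
  obtain ⟨c⟩ := ‹Nonempty α›
  refine ⟨f^[r] c, ?_, fun y hy => ?_, fun x => hconst x c⟩
  · rw [← Function.iterate_succ_apply' f r c, Function.iterate_succ_apply]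
    exact hconst _ _
  · rw [← Function.iterate_fixed hy r]
    exact hconst y c

theorem reaches_fixed_point_of_no_walk_general {K : Type*} [Field K] {n : ℕ}
    (f : (Fin n → K) → (Fin n → K)) (r : ℕ)
    (hwalk : ¬ ∃ v : ℕ → Fin n, ∀ t < r, DepEdge f (v t) (v (t + 1))) :
    ∃ x₀ : Fin n → K, f x₀ = x₀ ∧ (∀ y : Fin n → K, f y = y → y = x₀) ∧
      ∀ x : Fin n → K, (f^[r]) x = x₀ :=
  Function.exists_unique_fixedPoint_of_iterate_eq (iterate_eq_of_not_exists_walk f r hwalk)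

/-- If the dependency graph of `f : K^n → K^n` contains no directed walk of
length `r` (equivalently, the `r`-th max–min power of its dependency matrix is
zero), then `f^r` is a constant map; consequently every state reaches the
unique fixed point `x₀` of `f` in at most `r` steps. -/
theorem reaches_fixed_point_of_no_walk {K : Type*} [Field K] [Fintype K] {n : ℕ}
    (hn : 0 < n) (f : (Fin n → K) → (Fin n → K)) (r : ℕ) (hr : 1 ≤ r)
    (hwalk : ¬ ∃ v : ℕ → Fin n, ∀ t < r, DepEdge f (v t) (v (t + 1))) :
    ∃ x₀ : Fin n → K, f x₀ = x₀ ∧ (∀ y : Fin n → K, f y = y → y = x₀) ∧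
      ∀ x : Fin n → K, (f^[r]) x = x₀ :=
  reaches_fixed_point_of_no_walk_general f r hwalk
end

section
/- Consider the triangular ODE system x_i′(t) = f_i(x_1(t), …, x_{i−1}(t)) − k_i·x_i(t) for i = 1, …, n, where each f_i : ℝ^{i−1} → ℝ is continuous (f_1 is a constant) and each k_i > 0. Define s = (s_1, …, s_n) recursively by s_i = f_i(s_1, …, s_{i−1})/k_i. Then every differentiable solution x : [0, ∞) → ℝⁿ of the system satisfies lim_{t→∞} x(t) = s, regardless of the initial condition x(0). -/
/-!
Since `f_i` only sees the coordinates before `i`, the coordinates converge one at a time,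
by strong induction on `i`. Once `x_j → s_j` for all `j < i`, the forcing term
`g(t) = f_i(x_1(t), …, x_{i-1}(t))` tends to `k_i s_i` by continuity, and the scalar equation
`y' = g - k y` with `k > 0` forgets its initial value: Grönwall's inequality with the negative
rate `-k` traps `y` eventually below any `r > c / k` when `g` stays below `k r`, and
the same bound for `-y` traps it from below.
-/

open Filter Real Set Topology

theorem tendsto_gronwallBound_of_neg {K : ℝ} (hK : K < 0) (δ ε : ℝ) :
    Tendsto (gronwallBound δ K ε) atTop (𝓝 (-ε / K)) := by
  have hexp : Tendsto (fun x => exp (K * x)) atTop (𝓝 0) :=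
    tendsto_exp_atBot.comp (tendsto_id.const_mul_atTop_of_neg hK)
  rw [gronwallBound_of_K_ne_0 hK.ne]
  convert (hexp.const_mul δ).add ((hexp.sub_const 1).const_mul (ε / K)) using 2
  ring

theorem eventually_lt_of_hasDerivWithinAt_le_neg_mul_add {f f' : ℝ → ℝ} {k ε a r : ℝ}
    (hk : 0 < k) (hf : ∀ t ∈ Ici a, HasDerivWithinAt f (f' t) (Ici a) t)
    (bound : ∀ t ∈ Ici a, f' t ≤ -k * f t + ε) (hr : ε / k < r) :
    ∀ᶠ t in atTop, f t < r := by
  have hlim : Tendsto (fun t => gronwallBound (f a) (-k) ε (t - a)) atTop (𝓝 (ε / k)) := by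
    convert (tendsto_gronwallBound_of_neg (neg_lt_zero.2 hk) (f a) ε).comp
      (tendsto_atTop_add_const_right atTop (-a) tendsto_id) using 2
    · simp [sub_eq_add_neg]
    · rw [neg_div_neg_eq]
  filter_upwards [hlim.eventually (gt_mem_nhds hr), eventually_ge_atTop a] with t hlt hat
  refine lt_of_le_of_lt ?_ hlt
  have hIcc : Icc a t ⊆ Ici a := Icc_subset_Ici_self
  refine le_gronwallBound_of_liminf_deriv_right_le (b := t)
    (fun u hu => (hf u (hIcc hu)).continuousWithinAt.mono hIcc) (fun u hu r' hr' => ?_) le_rfl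
    (fun u hu => bound u (Ico_subset_Ici_self hu)) t (right_mem_Icc.2 hat)
  exact ((hf u (Ico_subset_Ici_self hu)).mono (Ici_subset_Ici.2 hu.1)).liminf_right_slope_le hr'

theorem eventually_lt_of_hasDerivWithinAt_sub_mul {g y : ℝ → ℝ} {k c a r : ℝ} (hk : 0 < k)
    (hg : Tendsto g atTop (𝓝 c))
    (hy : ∀ t ∈ Ici a, HasDerivWithinAt y (g t - k * y t) (Ici a) t) (hr : c / k < r) :
    ∀ᶠ t in atTop, y t < r := by
  obtain ⟨ε, hcε, hεr⟩ := exists_between (show c < k * r by rwa [div_lt_iff₀ hk, mul_comm] at hr)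
  obtain ⟨b, hb⟩ := eventually_atTop.1 (hg.eventually (gt_mem_nhds hcε))
  have hsub : Ici (max a b) ⊆ Ici a := Ici_subset_Ici.2 (le_max_left a b)
  refine eventually_lt_of_hasDerivWithinAt_le_neg_mul_add (a := max a b) (ε := ε) hk
    (fun t ht => (hy t (hsub ht)).mono hsub)
    (fun t ht => by linarith [hb t (le_of_max_le_right ht)]) ?_
  rwa [div_lt_iff₀ hk, mul_comm]

theorem tendsto_of_hasDerivWithinAt_sub_mul {g y : ℝ → ℝ} {k c a : ℝ} (hk : 0 < k)
    (hg : Tendsto g atTop (𝓝 c))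
    (hy : ∀ t ∈ Ici a, HasDerivWithinAt y (g t - k * y t) (Ici a) t) :
    Tendsto y atTop (𝓝 (c / k)) := by
  refine tendsto_order.2
    ⟨fun r hr => ?_, fun r hr => eventually_lt_of_hasDerivWithinAt_sub_mul hk hg hy hr⟩
  have hneg : ∀ t ∈ Ici a, HasDerivWithinAt (-y) ((-g) t - k * (-y) t) (Ici a) t := fun t ht =>
    (hy t ht).neg.congr_deriv (by simp only [Pi.neg_apply]; ring)
  filter_upwards [eventually_lt_of_hasDerivWithinAt_sub_mul hk hg.neg hneg (r := -r)
    (by rw [neg_div]; linarith)] with t ht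
  simpa using ht

/-- For the triangular ODE system `x_i′ = f_i(x_1, …, x_{i−1}) − k_i·x_i` with
each `f_i` continuous and each `k_i > 0`, every differentiable solution
converges, regardless of the initial condition, to the point `s` defined
recursively by `s_i = f_i(s_1, …, s_{i−1}) / k_i`. -/
theorem triangular_ode_tendsto {n : ℕ}
    (f : (i : Fin n) → ((Fin i.val → ℝ) → ℝ))
    (hf : ∀ i, Continuous (f i))
    (k : Fin n → ℝ) (hk : ∀ i, 0 < k i)
    (s : Fin n → ℝ)
    (hs : ∀ i, s i = f i (fun j => s (Fin.castLE i.isLt.le j)) / k i)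
    (x : ℝ → (Fin n → ℝ))
    (hx : ∀ (i : Fin n), ∀ t ∈ Set.Ici (0 : ℝ),
      HasDerivWithinAt (fun u => x u i)
        (f i (fun j => x t (Fin.castLE i.isLt.le j)) - k i * x t i)
        (Set.Ici 0) t) :
    Tendsto x atTop (nhds s) := by
  refine tendsto_pi_nhds.2 fun i => ?_
  induction i using WellFoundedLT.induction with
  | ind i ih =>
    have hpast : Tendsto (fun t j => x t (Fin.castLE i.isLt.le j)) atTop
        (nhds fun j => s (Fin.castLE i.isLt.le j)) :=
      tendsto_pi_nhds.2 fun j => ih _ j.isLt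
    rw [hs i]
    exact tendsto_of_hasDerivWithinAt_sub_mul (hk i) (((hf i).tendsto _).comp hpast) (hx i)
end
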